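/- Let G be a 3-partite graph with nonempty parts V1, V2, V3 such that d(V_i,V_j) ≥ 1/2 for all i ≠ j, and let X be an independent set in G with |X ∩ V_i| ≥ |V_i|/2 for each i = 1,2,3, such that at least two of these six inequalities (the three density inequalities and the three intersection inequalities) are strict. Then G contains a triangle. -/

import Mathlib

/-!
Write `Aᵢ = Vᵢ ∩ X`, `Bᵢ = Vᵢ \ X` and suppose `G` is triangle-free. A triple of vertices spans
at most two edges; counting edges in the triples of `Aᵢ × Bⱼ × Bₖ`, and paying for the edges
between `Bᵢ` and `Bⱼ` with `|Bₖ| ≤ |Aₖ|`, gives `∑ₖ |Bₖ| e(Vᵢ, Vⱼ) ≤ 2 ∑ |Aᵢ| |Bⱼ| |Bₖ|`.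
Against the density bounds this says that
`∑ₖ |Bₖ| (2 e(Vᵢ, Vⱼ) - |Vᵢ| |Vⱼ| + (|Aᵢ| - |Bᵢ|) (|Aⱼ| - |Bⱼ|))`, a sum of nonnegative terms,
is `≤ 0`. So a strict inequality at `i, j` forces `Vₖ ⊆ X`. Then every edge between `Vₖ` and
`Vᵢ` ends in `Bᵢ`, so `d(Vᵢ, Vₖ) ≥ 1/2` forces `|Aᵢ| ≤ |Bᵢ|`; in the case of equality `Vₖ` is
complete to `Bᵢ` and to `Bⱼ`, so there is no edge between `Bᵢ` and `Bⱼ` and `d(Vᵢ, Vⱼ) ≤ 1/2`.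
-/

open SimpleGraph Finset

namespace Finset

variable {α : Type*} [DecidableEq α]

theorem half_le_card_inter_iff (s X : Finset α) :
    (#s : ℚ) / 2 ≤ #(X ∩ s) ↔ #(s \ X) ≤ #(s ∩ X) := by
  rw [inter_comm, ← card_inter_add_card_sdiff s X, ← Nat.cast_le (α := ℚ)]
  push_cast
  constructor <;> intro h <;> linarith

theorem half_lt_card_inter_iff (s X : Finset α) :
    (#s : ℚ) / 2 < #(X ∩ s) ↔ #(s \ X) < #(s ∩ X) := by
  rw [inter_comm, ← card_inter_add_card_sdiff s X, ← Nat.cast_lt (α := ℚ)]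
  push_cast
  constructor <;> intro h <;> linarith

end Finset

theorem eq_zero_of_slack {a₁ a₂ a₃ b₁ b₂ b₃ e₁₂ e₁₃ e₂₃ : ℤ}
    (hb₁ : 0 ≤ b₁) (hb₂ : 0 ≤ b₂) (hb₃ : 0 ≤ b₃) (h₁ : b₁ ≤ a₁) (h₂ : b₂ ≤ a₂) (h₃ : b₃ ≤ a₃)
    (h₁₂ : (a₁ + b₁) * (a₂ + b₂) ≤ 2 * e₁₂) (h₁₃ : (a₁ + b₁) * (a₃ + b₃) ≤ 2 * e₁₃)
    (h₂₃ : (a₂ + b₂) * (a₃ + b₃) ≤ 2 * e₂₃)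
    (hsum : b₃ * e₁₂ + b₂ * e₁₃ + b₁ * e₂₃ ≤ 2 * (a₁ * b₂ * b₃ + a₂ * b₁ * b₃ + a₃ * b₁ * b₂))
    (hslack : (a₁ + b₁) * (a₂ + b₂) < 2 * e₁₂ ∨ (b₁ < a₁ ∧ b₂ < a₂)) : b₃ = 0 := by
  -- Twice `hsum` says exactly that these three nonnegative terms have nonpositive sum.
  have hkey : b₃ * (2 * e₁₂ - (a₁ + b₁) * (a₂ + b₂) + (a₁ - b₁) * (a₂ - b₂)) +
      b₂ * (2 * e₁₃ - (a₁ + b₁) * (a₃ + b₃) + (a₁ - b₁) * (a₃ - b₃)) +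
      b₁ * (2 * e₂₃ - (a₂ + b₂) * (a₃ + b₃) + (a₂ - b₂) * (a₃ - b₃)) ≤ 0 := by
    linear_combination 2 * hsum
  have t₂ : 0 ≤ b₂ * (2 * e₁₃ - (a₁ + b₁) * (a₃ + b₃) + (a₁ - b₁) * (a₃ - b₃)) :=
    mul_nonneg hb₂ (by linarith [mul_nonneg (sub_nonneg.2 h₁) (sub_nonneg.2 h₃)])
  have t₁ : 0 ≤ b₁ * (2 * e₂₃ - (a₂ + b₂) * (a₃ + b₃) + (a₂ - b₂) * (a₃ - b₃)) :=
    mul_nonneg hb₁ (by linarith [mul_nonneg (sub_nonneg.2 h₂) (sub_nonneg.2 h₃)])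
  have hpos : 0 < 2 * e₁₂ - (a₁ + b₁) * (a₂ + b₂) + (a₁ - b₁) * (a₂ - b₂) := by
    rcases hslack with h | ⟨h₁', h₂'⟩
    · linarith [mul_nonneg (sub_nonneg.2 h₁) (sub_nonneg.2 h₂)]
    · linarith [mul_pos (sub_pos.2 h₁') (sub_pos.2 h₂')]
  nlinarith

theorem not_exists_two_of_six {p₀ p₁ p₂ p₃ p₄ p₅ : Prop} (h₀ : ¬p₀) (h₁ : ¬p₁) (h₂ : ¬p₂)
    (h₃₄ : ¬(p₃ ∧ p₄)) (h₃₅ : ¬(p₃ ∧ p₅)) (h₄₅ : ¬(p₄ ∧ p₅)) :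
    ¬∃ a b : Fin 6, a ≠ b ∧ ![p₀, p₁, p₂, p₃, p₄, p₅] a ∧ ![p₀, p₁, p₂, p₃, p₄, p₅] b := by
  rintro ⟨a, b, hab, ha, hb⟩
  fin_cases a <;> fin_cases b <;> simp_all

namespace SimpleGraph

variable {α : Type*} {G : SimpleGraph α} [DecidableRel G.Adj]

theorem card_interedges_eq_sum (s t : Finset α) :
    #(G.interedges s t) = ∑ x ∈ s, ∑ y ∈ t, if G.Adj x y then 1 else 0 := by
  rw [interedges_def, card_filter, sum_product]

theorem card_interedges_comm (s t : Finset α) :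
    #(G.interedges s t) = #(G.interedges t s) :=
  have := G.symm
  Rel.card_interedges_comm s t

theorem card_interedges_eq_zero_of_subset {X : Finset α} (hX : ∀ x ∈ X, ∀ y ∈ X, ¬ G.Adj x y)
    {s t : Finset α} (hs : s ⊆ X) (ht : t ⊆ X) : #(G.interedges s t) = 0 := by
  rw [card_eq_zero, eq_empty_iff_forall_notMem]
  rintro ⟨x, y⟩ hxy
  obtain ⟨hx, hy, hadj⟩ := (G.mem_interedges_iff).1 hxy
  exact hX x (hs hx) y (ht hy) hadj

theorem half_le_edgeDensity_iff {s t : Finset α} (hs : s.Nonempty) (ht : t.Nonempty) :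
    (1 : ℚ) / 2 ≤ G.edgeDensity s t ↔ #s * #t ≤ 2 * #(G.interedges s t) := by
  have hpos : (0 : ℚ) < #s * #t := by have := hs.card_pos; have := ht.card_pos; positivity
  rw [edgeDensity_def, le_div_iff₀ hpos, ← Nat.cast_le (α := ℚ)]
  push_cast
  constructor <;> intro h <;> linarith

theorem half_lt_edgeDensity_iff {s t : Finset α} (hs : s.Nonempty) (ht : t.Nonempty) :
    (1 : ℚ) / 2 < G.edgeDensity s t ↔ #s * #t < 2 * #(G.interedges s t) := by
  have hpos : (0 : ℚ) < #s * #t := by have := hs.card_pos; have := ht.card_pos; positivity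
  rw [edgeDensity_def, lt_div_iff₀ hpos, ← Nat.cast_lt (α := ℚ)]
  push_cast
  constructor <;> intro h <;> linarith

variable [DecidableEq α]

/-- Each triple of vertices spans at most two edges. -/
theorem CliqueFree.triple_edge_count_le (hG : G.CliqueFree 3) (p q r : Finset α) :
    #r * #(G.interedges p q) + #q * #(G.interedges p r) + #p * #(G.interedges q r) ≤
      2 * (#p * #q * #r) := by
  have htriple : ∀ x y z : α, (if G.Adj x y then 1 else 0) + (if G.Adj x z then 1 else 0) +
      (if G.Adj y z then 1 else 0) ≤ 2 := by
    intro x y z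
    by_cases hxy : G.Adj x y <;> by_cases hxz : G.Adj x z <;> by_cases hyz : G.Adj y z <;>
      simp only [hxy, hxz, hyz, if_true, if_false] <;> try omega
    exact absurd (is3Clique_triple_iff.2 ⟨hxy, hxz, hyz⟩) (hG _)
  calc _ = ∑ x ∈ p, ∑ y ∈ q, ∑ z ∈ r, ((if G.Adj x y then 1 else 0) +
        (if G.Adj x z then 1 else 0) + (if G.Adj y z then 1 else 0)) := by
          simp only [card_interedges_eq_sum, sum_add_distrib, sum_const, smul_eq_mul, mul_sum]
    _ ≤ ∑ x ∈ p, ∑ y ∈ q, ∑ z ∈ r, 2 := by gcongr with x _ y _ z _; exact htriple x y z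
    _ = 2 * (#p * #q * #r) := by simp only [sum_const, smul_eq_mul]; ring

theorem card_interedges_inter_add_card_interedges_sdiff_left (s t X : Finset α) :
    #(G.interedges (s ∩ X) t) + #(G.interedges (s \ X) t) = #(G.interedges s t) := by
  simp only [card_interedges_eq_sum]
  exact sum_inter_add_sum_sdiff s X _

theorem card_interedges_inter_add_card_interedges_sdiff_right (s t X : Finset α) :
    #(G.interedges s (t ∩ X)) + #(G.interedges s (t \ X)) = #(G.interedges s t) := by
  simp only [card_interedges_eq_sum, ← sum_add_distrib]
  exact sum_congr rfl fun x _ ↦ sum_inter_add_sum_sdiff t X _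

variable {X : Finset α}

theorem card_interedges_eq_of_indep (hX : ∀ x ∈ X, ∀ y ∈ X, ¬ G.Adj x y) (s t : Finset α) :
    #(G.interedges s t) = #(G.interedges (s ∩ X) (t \ X)) + #(G.interedges (s \ X) (t ∩ X)) +
      #(G.interedges (s \ X) (t \ X)) := by
  have hzero := card_interedges_eq_zero_of_subset hX (s := s ∩ X) (t := t ∩ X)
    inter_subset_right inter_subset_right
  rw [← card_interedges_inter_add_card_interedges_sdiff_left s t X,
    ← card_interedges_inter_add_card_interedges_sdiff_right (s ∩ X) t X,
    ← card_interedges_inter_add_card_interedges_sdiff_right (s \ X) t X]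
  omega

theorem card_interedges_sdiff_left_of_subset (hX : ∀ x ∈ X, ∀ y ∈ X, ¬ G.Adj x y)
    (s : Finset α) {t : Finset α} (ht : t ⊆ X) :
    #(G.interedges (s \ X) t) = #(G.interedges s t) := by
  rw [← card_interedges_inter_add_card_interedges_sdiff_left s t X,
    card_interedges_eq_zero_of_subset hX inter_subset_right ht, zero_add]

theorem CliqueFree.sum_card_sdiff_mul_card_interedges_le (hG : G.CliqueFree 3)
    (hX : ∀ x ∈ X, ∀ y ∈ X, ¬ G.Adj x y) (V₁ V₂ V₃ : Finset α)
    (h₁ : #(V₁ \ X) ≤ #(V₁ ∩ X)) (h₂ : #(V₂ \ X) ≤ #(V₂ ∩ X)) (h₃ : #(V₃ \ X) ≤ #(V₃ ∩ X)) :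
    #(V₃ \ X) * #(G.interedges V₁ V₂) + #(V₂ \ X) * #(G.interedges V₁ V₃) +
        #(V₁ \ X) * #(G.interedges V₂ V₃) ≤
      2 * (#(V₁ ∩ X) * #(V₂ \ X) * #(V₃ \ X) + #(V₂ ∩ X) * #(V₁ \ X) * #(V₃ \ X) +
        #(V₃ ∩ X) * #(V₁ \ X) * #(V₂ \ X)) := by
  rw [card_interedges_eq_of_indep hX V₁ V₂, card_interedges_eq_of_indep hX V₁ V₃,
    card_interedges_eq_of_indep hX V₂ V₃, G.card_interedges_comm (V₁ \ X) (V₂ ∩ X),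
    G.card_interedges_comm (V₁ \ X) (V₃ ∩ X), G.card_interedges_comm (V₂ \ X) (V₃ ∩ X)]
  have T₁ := hG.triple_edge_count_le (V₁ ∩ X) (V₂ \ X) (V₃ \ X)
  have T₂ := hG.triple_edge_count_le (V₂ ∩ X) (V₁ \ X) (V₃ \ X)
  have T₃ := hG.triple_edge_count_le (V₃ ∩ X) (V₁ \ X) (V₂ \ X)
  -- Reweighting the edges between `V₁ \ X` and `V₂ \ X` by the larger `#(V₃ ∩ X)` puts them
  -- into the triples counted by `T₃`; likewise for the other two pairs.
  have M₁ := Nat.mul_le_mul_right #(G.interedges (V₂ \ X) (V₃ \ X)) h₁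
  have M₂ := Nat.mul_le_mul_right #(G.interedges (V₁ \ X) (V₃ \ X)) h₂
  have M₃ := Nat.mul_le_mul_right #(G.interedges (V₁ \ X) (V₂ \ X)) h₃
  linarith

theorem card_inter_le_card_sdiff_of_subset (hX : ∀ x ∈ X, ∀ y ∈ X, ¬ G.Adj x y)
    {s t : Finset α} (ht : t ⊆ X) (htne : t.Nonempty)
    (hst : #s * #t ≤ 2 * #(G.interedges s t)) : #(s ∩ X) ≤ #(s \ X) := by
  have hle : #(G.interedges s t) ≤ #(s \ X) * #t :=
    card_interedges_sdiff_left_of_subset hX s ht ▸ G.card_interedges_le_mul _ _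
  have hs : #s ≤ 2 * #(s \ X) :=
    Nat.le_of_mul_le_mul_right (by linarith : #s * #t ≤ 2 * #(s \ X) * #t) htne.card_pos
  have := card_inter_add_card_sdiff s X
  omega

theorem CliqueFree.two_mul_card_interedges_le_of_subset (hG : G.CliqueFree 3)
    (hX : ∀ x ∈ X, ∀ y ∈ X, ¬ G.Adj x y) {V₁ V₂ V₃ : Finset α} (hV₃ : V₃ ⊆ X)
    (hne : V₃.Nonempty) (h₁₃ : #V₁ * #V₃ ≤ 2 * #(G.interedges V₁ V₃))
    (h₂₃ : #V₂ * #V₃ ≤ 2 * #(G.interedges V₂ V₃))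
    (h₁ : #(V₁ \ X) ≤ #(V₁ ∩ X)) (h₂ : #(V₂ \ X) ≤ #(V₂ ∩ X)) :
    2 * #(G.interedges V₁ V₂) ≤ #V₁ * #V₂ := by
  have hA₁ := le_antisymm (card_inter_le_card_sdiff_of_subset hX hV₃ hne h₁₃) h₁
  have hn₁ : #V₁ = 2 * #(V₁ \ X) := by
    have := card_inter_add_card_sdiff V₁ X
    omega
  have hA₂ := le_antisymm (card_inter_le_card_sdiff_of_subset hX hV₃ hne h₂₃) h₂
  have hn₂ : #V₂ = 2 * #(V₂ \ X) := by
    have := card_inter_add_card_sdiff V₂ X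
    omega
  have hB₁ : #(V₁ \ X) * #V₃ ≤ #(G.interedges (V₁ \ X) V₃) := by
    rw [card_interedges_sdiff_left_of_subset hX V₁ hV₃]; nlinarith
  have hB₂ : #(V₂ \ X) * #V₃ ≤ #(G.interedges (V₂ \ X) V₃) := by
    rw [card_interedges_sdiff_left_of_subset hX V₂ hV₃]; nlinarith
  -- `V₃` is completely joined to `V₁ \ X` and to `V₂ \ X`, so no edge runs between these two.
  have hout : #V₃ * #(G.interedges (V₁ \ X) (V₂ \ X)) = 0 := by
    have := hG.triple_edge_count_le (V₁ \ X) (V₂ \ X) V₃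
    have := Nat.mul_le_mul_left #(V₂ \ X) hB₁
    have := Nat.mul_le_mul_left #(V₁ \ X) hB₂
    nlinarith
  have hBB := (mul_eq_zero.1 hout).resolve_left hne.card_pos.ne'
  have hAB := G.card_interedges_le_mul (V₁ ∩ X) (V₂ \ X)
  have hBA := G.card_interedges_le_mul (V₁ \ X) (V₂ ∩ X)
  rw [hA₁] at hAB
  rw [hA₂] at hBA
  rw [card_interedges_eq_of_indep hX V₁ V₂, hBB, hn₁, hn₂]
  linarith

theorem CliqueFree.subset_of_slack (hG : G.CliqueFree 3) (hX : ∀ x ∈ X, ∀ y ∈ X, ¬ G.Adj x y)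
    {V₁ V₂ V₃ : Finset α} (h₁₂ : #V₁ * #V₂ ≤ 2 * #(G.interedges V₁ V₂))
    (h₁₃ : #V₁ * #V₃ ≤ 2 * #(G.interedges V₁ V₃)) (h₂₃ : #V₂ * #V₃ ≤ 2 * #(G.interedges V₂ V₃))
    (h₁ : #(V₁ \ X) ≤ #(V₁ ∩ X)) (h₂ : #(V₂ \ X) ≤ #(V₂ ∩ X)) (h₃ : #(V₃ \ X) ≤ #(V₃ ∩ X))
    (hslack : #V₁ * #V₂ < 2 * #(G.interedges V₁ V₂) ∨
      (#(V₁ \ X) < #(V₁ ∩ X) ∧ #(V₂ \ X) < #(V₂ ∩ X))) :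
    V₃ ⊆ X := by
  have hsum := hG.sum_card_sdiff_mul_card_interedges_le hX V₁ V₂ V₃ h₁ h₂ h₃
  rw [← card_inter_add_card_sdiff V₁ X, ← card_inter_add_card_sdiff V₂ X] at h₁₂ hslack
  rw [← card_inter_add_card_sdiff V₁ X, ← card_inter_add_card_sdiff V₃ X] at h₁₃
  rw [← card_inter_add_card_sdiff V₂ X, ← card_inter_add_card_sdiff V₃ X] at h₂₃
  zify at h₁ h₂ h₃ h₁₂ h₁₃ h₂₃ hsum hslack
  have hB₃ : (#(V₃ \ X) : ℤ) = 0 := eq_zero_of_slack (by positivity) (by positivity)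
    (by positivity) h₁ h₂ h₃ h₁₂ h₁₃ h₂₃ hsum hslack
  exact sdiff_eq_empty_iff_subset.1 (card_eq_zero.1 (by exact_mod_cast hB₃))

theorem CliqueFree.not_slack (hG : G.CliqueFree 3) (hX : ∀ x ∈ X, ∀ y ∈ X, ¬ G.Adj x y)
    {V₁ V₂ V₃ : Finset α} (hne : V₃.Nonempty) (h₁₂ : #V₁ * #V₂ ≤ 2 * #(G.interedges V₁ V₂))
    (h₁₃ : #V₁ * #V₃ ≤ 2 * #(G.interedges V₁ V₃)) (h₂₃ : #V₂ * #V₃ ≤ 2 * #(G.interedges V₂ V₃))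
    (h₁ : #(V₁ \ X) ≤ #(V₁ ∩ X)) (h₂ : #(V₂ \ X) ≤ #(V₂ ∩ X)) (h₃ : #(V₃ \ X) ≤ #(V₃ ∩ X)) :
    ¬ (#V₁ * #V₂ < 2 * #(G.interedges V₁ V₂) ∨
      (#(V₁ \ X) < #(V₁ ∩ X) ∧ #(V₂ \ X) < #(V₂ ∩ X))) := by
  intro hslack
  have hV₃ := hG.subset_of_slack hX h₁₂ h₁₃ h₂₃ h₁ h₂ h₃ hslack
  rcases hslack with hdens | ⟨hhalf, -⟩
  · exact (hG.two_mul_card_interedges_le_of_subset hX hV₃ hne h₁₃ h₂₃ h₁ h₂).not_gt hdens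
  · exact (card_inter_le_card_sdiff_of_subset hX hV₃ hne h₁₃).not_gt hhalf

end SimpleGraph

theorem stmt1_general {α : Type*} [DecidableEq α]
    (G : SimpleGraph α) [DecidableRel G.Adj] (V : Fin 3 → Finset α)
    (hne : ∀ i, (V i).Nonempty)
    (X : Finset α)
    (hX : ∀ x ∈ X, ∀ y ∈ X, ¬ G.Adj x y)
    (hdens : ∀ i j, i ≠ j → (1 : ℚ) / 2 ≤ G.edgeDensity (V i) (V j))
    (hXhalf : ∀ i, ((V i).card : ℚ) / 2 ≤ ((X ∩ V i).card : ℚ))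
    (hstrict : ∃ a b : Fin 6, a ≠ b ∧
      (![ (1 : ℚ) / 2 < G.edgeDensity (V 0) (V 1),
          (1 : ℚ) / 2 < G.edgeDensity (V 0) (V 2),
          (1 : ℚ) / 2 < G.edgeDensity (V 1) (V 2),
          ((V 0).card : ℚ) / 2 < ((X ∩ V 0).card : ℚ),
          ((V 1).card : ℚ) / 2 < ((X ∩ V 1).card : ℚ),
          ((V 2).card : ℚ) / 2 < ((X ∩ V 2).card : ℚ) ] a) ∧
      (![ (1 : ℚ) / 2 < G.edgeDensity (V 0) (V 1),
          (1 : ℚ) / 2 < G.edgeDensity (V 0) (V 2),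
          (1 : ℚ) / 2 < G.edgeDensity (V 1) (V 2),
          ((V 0).card : ℚ) / 2 < ((X ∩ V 0).card : ℚ),
          ((V 1).card : ℚ) / 2 < ((X ∩ V 1).card : ℚ),
          ((V 2).card : ℚ) / 2 < ((X ∩ V 2).card : ℚ) ] b)) :
    ¬ G.CliqueFree 3 := by
  intro hG
  have hdens' : ∀ i j, i ≠ j → #(V i) * #(V j) ≤ 2 * #(G.interedges (V i) (V j)) :=
    fun i j hij ↦ (half_le_edgeDensity_iff (hne i) (hne j)).1 (hdens i j hij)
  have hhalf : ∀ i, #(V i \ X) ≤ #(V i ∩ X) := fun i ↦ (half_le_card_inter_iff _ _).1 (hXhalf i)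
  have hslack : ∀ i j, i ≠ j → ¬ ((1 : ℚ) / 2 < G.edgeDensity (V i) (V j) ∨
      ((#(V i) : ℚ) / 2 < #(X ∩ V i) ∧ (#(V j) : ℚ) / 2 < #(X ∩ V j))) := by
    intro i j hij
    obtain ⟨k, hki, hkj⟩ : ∃ k, k ≠ i ∧ k ≠ j := by revert i j; decide
    rw [half_lt_edgeDensity_iff (hne i) (hne j), half_lt_card_inter_iff, half_lt_card_inter_iff]
    exact hG.not_slack hX (hne k) (hdens' i j hij) (hdens' i k hki.symm) (hdens' j k hkj.symm)
      (hhalf i) (hhalf j) (hhalf k)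
  exact not_exists_two_of_six (fun h ↦ hslack 0 1 (by decide) (.inl h))
    (fun h ↦ hslack 0 2 (by decide) (.inl h)) (fun h ↦ hslack 1 2 (by decide) (.inl h))
    (fun h ↦ hslack 0 1 (by decide) (.inr h)) (fun h ↦ hslack 0 2 (by decide) (.inr h))
    (fun h ↦ hslack 1 2 (by decide) (.inr h)) hstrict

theorem stmt1 {α : Type*} [Fintype α] [DecidableEq α]
    (G : SimpleGraph α) [DecidableRel G.Adj] (V : Fin 3 → Finset α)
    (hpart : ∀ v : α, ∃! i, v ∈ V i)
    (hind : ∀ i, ∀ x ∈ V i, ∀ y ∈ V i, ¬ G.Adj x y)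
    (hne : ∀ i, (V i).Nonempty)
    (X : Finset α)
    (hX : ∀ x ∈ X, ∀ y ∈ X, ¬ G.Adj x y)
    (hdens : ∀ i j, i ≠ j → (1 : ℚ) / 2 ≤ G.edgeDensity (V i) (V j))
    (hXhalf : ∀ i, ((V i).card : ℚ) / 2 ≤ ((X ∩ V i).card : ℚ))
    (hstrict : ∃ a b : Fin 6, a ≠ b ∧
      (![ (1 : ℚ) / 2 < G.edgeDensity (V 0) (V 1),
          (1 : ℚ) / 2 < G.edgeDensity (V 0) (V 2),
          (1 : ℚ) / 2 < G.edgeDensity (V 1) (V 2),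
          ((V 0).card : ℚ) / 2 < ((X ∩ V 0).card : ℚ),
          ((V 1).card : ℚ) / 2 < ((X ∩ V 1).card : ℚ),
          ((V 2).card : ℚ) / 2 < ((X ∩ V 2).card : ℚ) ] a) ∧
      (![ (1 : ℚ) / 2 < G.edgeDensity (V 0) (V 1),
          (1 : ℚ) / 2 < G.edgeDensity (V 0) (V 2),
          (1 : ℚ) / 2 < G.edgeDensity (V 1) (V 2),
          ((V 0).card : ℚ) / 2 < ((X ∩ V 0).card : ℚ),
          ((V 1).card : ℚ) / 2 < ((X ∩ V 1).card : ℚ),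
          ((V 2).card : ℚ) / 2 < ((X ∩ V 2).card : ℚ) ] b)) :
    ¬ G.CliqueFree 3 :=
  stmt1_general G V hne X hX hdens hXhalf hstrict
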